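/- arXiv:1701.07172 — 3 statements merged into one kernel-verified Lean document; each statement's English description precedes it below -/
import Mathlib

section
/- Let Γ be a group, let ζ ∈ Γ be an element of finite order d, and let n be a positive natural number with d < n². Then for every x ∈ Γ, x lies in the cyclic subgroup generated by ζ if and only if there exist natural numbers a ≤ n and b ≤ n such that ζ^b * x = (ζ^n)^a. -/
/-! Every element of `⟨ζ⟩` is `ζ ^ m` with `m < d < n²`; rounding `m` up to a multiple `n * a` of `n`
gives `ζ ^ b * ζ ^ m = (ζ ^ n) ^ a` with `a ≤ n` and `b = n * a - m ≤ n`. -/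

lemma Nat.exists_add_eq_mul_of_lt_sq {m n : ℕ} (h : m < n ^ 2) :
    ∃ a b : ℕ, a ≤ n ∧ b ≤ n ∧ b + m = n * a := by
  have hn : 0 < n := Nat.pos_of_ne_zero (by rintro rfl; simp at h)
  refine ⟨m / n + 1, n - m % n, ?_, Nat.sub_le _ _, ?_⟩
  · exact Nat.div_lt_of_lt_mul (sq n ▸ h)
  · have := Nat.div_add_mod m n
    have := Nat.mod_lt m hn
    rw [Nat.mul_succ]
    omega

lemma IsOfFinOrder.exists_pow_lt_orderOf_eq {G : Type*} [Group G] {x y : G}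
    (hx : IsOfFinOrder x) (hy : y ∈ Subgroup.zpowers x) :
    ∃ m < orderOf x, x ^ m = y := by
  classical
  simpa using hx.mem_zpowers_iff_mem_range_orderOf.mp hy

theorem bsgs_membership_criterion_general
    {Γ : Type*} [Group Γ] (ζ : Γ) (d n : ℕ)
    (hd : orderOf ζ = d) (hd0 : 0 < d) (hdn : d < n ^ 2) :
    ∀ x : Γ, x ∈ Subgroup.zpowers ζ ↔
      ∃ a b : ℕ, a ≤ n ∧ b ≤ n ∧ ζ ^ b * x = (ζ ^ n) ^ a := by
  intro x
  constructor
  · intro hx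
    obtain ⟨m, hm, rfl⟩ :=
      (orderOf_pos_iff.mp (hd ▸ hd0)).exists_pow_lt_orderOf_eq hx
    obtain ⟨a, b, ha, hb, hab⟩ := Nat.exists_add_eq_mul_of_lt_sq ((hd ▸ hm).trans hdn)
    exact ⟨a, b, ha, hb, by rw [← pow_add, hab, pow_mul]⟩
  · rintro ⟨a, b, -, -, hab⟩
    have hζ := Subgroup.mem_zpowers ζ
    rw [← Subgroup.mul_mem_cancel_left _ (pow_mem hζ b), hab]
    exact pow_mem (pow_mem hζ n) a

theorem bsgs_membership_criterion
    {Γ : Type*} [Group Γ] (ζ : Γ) (d n : ℕ)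
    (hd : orderOf ζ = d) (hd0 : 0 < d) (hn : 0 < n) (hdn : d < n ^ 2) :
    ∀ x : Γ, x ∈ Subgroup.zpowers ζ ↔
      ∃ a b : ℕ, a ≤ n ∧ b ≤ n ∧ ζ ^ b * x = (ζ ^ n) ^ a :=
  bsgs_membership_criterion_general ζ d n hd hd0 hdn
end

section
/- Let G be an additive group and let P be an element of G whose additive order is a prime p. Let x be a unit of ZMod p and set Q = ((x : ZMod p)).val • P. Let ζ be a unit of ZMod p of multiplicative order d, and let n be a positive natural number with d < n². If natural numbers a ≤ n and b ≤ n satisfy ((ζ^b : (ZMod p)ˣ) : ZMod p).val • Q = (((ζ^n)^a : (ZMod p)ˣ) : ZMod p).val • P in G, then x = ζ^((a : ℤ)·n − b) in (ZMod p)ˣ; in particular the discrete logarithm x is recovered from the collision (a, b). -/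
/-! The collision says `ζ^b · x · P = ζ^(n a) · P`. Since `P` has order `p`, a multiple `m • P`
determines `m` modulo `p`, so the collision is the identity `ζ^b · x = (ζ^n)^a` in `(ZMod p)ˣ`,
which is solved for `x`. -/

theorem nsmul_eq_nsmul_iff_natCast_eq {G : Type*} [AddGroup G] {P : G} {p : ℕ}
    (hP : addOrderOf P = p) (m k : ℕ) : m • P = k • P ↔ (m : ZMod p) = k := by
  rw [nsmul_eq_nsmul_iff_modEq, hP, ZMod.natCast_eq_natCast_iff]

theorem val_nsmul_val_nsmul_eq_val_nsmul_iff {G : Type*} [AddGroup G] {P : G} {p : ℕ}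
    [NeZero p] (hP : addOrderOf P = p) (u v w : ZMod p) :
    u.val • v.val • P = w.val • P ↔ u * v = w := by
  rw [← mul_nsmul', nsmul_eq_nsmul_iff_natCast_eq hP, Nat.cast_mul]
  simp only [ZMod.natCast_zmod_val]

theorem eq_zpow_sub_of_pow_mul_eq {α : Type*} [Group α] {g x : α} {n a b : ℕ}
    (h : g ^ b * x = (g ^ n) ^ a) : x = g ^ ((a : ℤ) * n - b) := by
  rw [eq_inv_mul_of_mul_eq h, ← pow_mul, ← zpow_natCast, ← zpow_natCast, ← zpow_neg,
    ← zpow_add]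
  push_cast
  ring_nf

theorem bsgs_dlog_recovery_general
    {G : Type*} [AddGroup G] (P : G) (p : ℕ) (hp : p.Prime)
    (hP : addOrderOf P = p)
    (x : (ZMod p)ˣ) (Q : G) (hQ : Q = ((x : ZMod p)).val • P)
    (ζ : (ZMod p)ˣ) (n : ℕ)
    (a b : ℕ)
    (hcoll : ((ζ ^ b : (ZMod p)ˣ) : ZMod p).val • Q =
      (((ζ ^ n) ^ a : (ZMod p)ˣ) : ZMod p).val • P) :
    x = ζ ^ ((a : ℤ) * n - b) := by
  have : NeZero p := ⟨hp.ne_zero⟩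
  rw [hQ, val_nsmul_val_nsmul_eq_val_nsmul_iff hP] at hcoll
  exact eq_zpow_sub_of_pow_mul_eq (Units.ext hcoll)

theorem bsgs_dlog_recovery
    {G : Type*} [AddGroup G] (P : G) (p : ℕ) (hp : p.Prime)
    (hP : addOrderOf P = p)
    (x : (ZMod p)ˣ) (Q : G) (hQ : Q = ((x : ZMod p)).val • P)
    (ζ : (ZMod p)ˣ) (d n : ℕ) (hd : orderOf ζ = d)
    (hn : 0 < n) (hdn : d < n ^ 2)
    (a b : ℕ) (ha : a ≤ n) (hb : b ≤ n)
    (hcoll : ((ζ ^ b : (ZMod p)ˣ) : ZMod p).val • Q =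
      (((ζ ^ n) ^ a : (ZMod p)ˣ) : ZMod p).val • P) :
    x = ζ ^ ((a : ℤ) * n - b) :=
  bsgs_dlog_recovery_general P p hp hP x Q hQ ζ n a b hcoll
end

section
/- Let p be a prime, let H be a subgroup of (ZMod p)ˣ of cardinality d, let x ∈ (ZMod p)ˣ, and let m be a natural number. Then, over the real numbers, (card {f : Fin m → (ZMod p)ˣ | ∃ i, f i * x ∈ H} : ℝ) / (p − 1)^m ≥ 1 − exp(−(d·m)/(p − 1)). -/
/-!
Each thread misses the coset `H * x⁻¹` independently with probability `1 - d / (p - 1)`, so all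
`m` threads miss it with probability `(1 - d / (p - 1)) ^ m ≤ exp (-(d * m / (p - 1)))`,
by `1 - t ≤ exp (-t)`.
-/

theorem Nat.card_subtype_add_card_subtype_not {α : Type*} [Finite α] (P : α → Prop) :
    Nat.card {a // P a} + Nat.card {a // ¬ P a} = Nat.card α := by
  classical
  have := Fintype.ofFinite α
  simp only [Nat.card_eq_fintype_card]
  rw [Fintype.card_subtype_compl, Nat.add_sub_cancel' (Fintype.card_subtype_le P)]

theorem Nat.card_exists_apply_add_card_not_pow {ι α : Type*} [Finite ι] [Finite α]
    (P : α → Prop) :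
    Nat.card {f : ι → α // ∃ i, P (f i)} + Nat.card {a // ¬ P a} ^ Nat.card ι =
      Nat.card α ^ Nat.card ι := by
  have hnone : Nat.card {f : ι → α // ∀ i, ¬ P (f i)} = Nat.card {a // ¬ P a} ^ Nat.card ι := by
    rw [Nat.card_congr (Equiv.subtypePiEquivPi (p := fun _ a => ¬ P a)), Nat.card_fun]
  rw [← hnone, ← Nat.card_fun]
  simpa only [not_exists] using Nat.card_subtype_add_card_subtype_not (fun f : ι → α => ∃ i, P (f i))

theorem Subgroup.card_mul_right_mem {G : Type*} [Group G] (H : Subgroup G) (x : G) :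
    Nat.card {y : G // y * x ∈ H} = Nat.card H :=
  Nat.card_congr ((Equiv.mulRight x).subtypeEquiv fun _ => Iff.rfl)

theorem Real.one_sub_pow_le_exp_neg_mul {t : ℝ} (ht : t ≤ 1) (m : ℕ) :
    (1 - t) ^ m ≤ Real.exp (-(t * m)) := by
  calc (1 - t) ^ m ≤ Real.exp (-t) ^ m :=
        pow_le_pow_left₀ (by linarith) (Real.one_sub_le_exp_neg t) m
    _ = Real.exp (-(t * m)) := by rw [← Real.exp_nat_mul]; ring_nf

theorem Nat.card_exists_apply_div_card_pow {ι α : Type*} [Finite ι] [Finite α] [Nonempty α]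
    (P : α → Prop) :
    (Nat.card {f : ι → α // ∃ i, P (f i)} : ℝ) / Nat.card α ^ Nat.card ι =
      1 - (1 - Nat.card {a // P a} / Nat.card α) ^ Nat.card ι := by
  have hα : (0 : ℝ) < Nat.card α := by exact_mod_cast Nat.card_pos
  have hsplit : (Nat.card {a // P a} : ℝ) + Nat.card {a // ¬ P a} = Nat.card α := by
    exact_mod_cast Nat.card_subtype_add_card_subtype_not P
  have hcount : (Nat.card {f : ι → α // ∃ i, P (f i)} : ℝ) + Nat.card {a // ¬ P a} ^ Nat.card ι =
      Nat.card α ^ Nat.card ι := by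
    exact_mod_cast Nat.card_exists_apply_add_card_not_pow (ι := ι) P
  have hmiss : 1 - (Nat.card {a // P a} : ℝ) / Nat.card α = Nat.card {a // ¬ P a} / Nat.card α := by
    field_simp
    linarith
  rw [hmiss, div_pow, eq_sub_iff_add_eq, ← add_div, hcount, div_self (by positivity)]

theorem ZMod.cast_card_units (p : ℕ) [Fact p.Prime] :
    (Nat.card (ZMod p)ˣ : ℝ) = (p : ℝ) - 1 := by
  rw [Nat.card_eq_fintype_card, ZMod.card_units, Nat.cast_sub (Fact.out : p.Prime).one_le,
    Nat.cast_one]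

theorem probabilistic_bsgs_success_probability
    (p : ℕ) (hp : p.Prime) (H : Subgroup (ZMod p)ˣ) (d : ℕ)
    (hd : d = Nat.card H) (x : (ZMod p)ˣ) (m : ℕ) :
    (Nat.card {f : Fin m → (ZMod p)ˣ // ∃ i, f i * x ∈ H} : ℝ) /
        ((p : ℝ) - 1) ^ m ≥
      1 - Real.exp (-((d : ℝ) * m) / ((p : ℝ) - 1)) := by
  have : Fact p.Prime := ⟨hp⟩
  have hprob := Nat.card_exists_apply_div_card_pow (ι := Fin m) (fun y : (ZMod p)ˣ => y * x ∈ H)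
  rw [Nat.card_fin, H.card_mul_right_mem, ← hd, ZMod.cast_card_units] at hprob
  have hdle : (d : ℝ) / ((p : ℝ) - 1) ≤ 1 := by
    rw [← ZMod.cast_card_units, hd]
    exact div_le_one_of_le₀ (by exact_mod_cast H.card_le_card_group) (Nat.cast_nonneg _)
  have hexp := Real.one_sub_pow_le_exp_neg_mul hdle m
  rw [show -((d : ℝ) * m) / ((p : ℝ) - 1) = -(d / ((p : ℝ) - 1) * m) by ring]
  linarith
end
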